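/- A De Morgan function lies in the clone ⟨DLat, ∂⟩ (equivalently ⟨∧, ∨, t, f, ∂⟩) if and only if it is harmonious and positive. -/
import Mathlib


set_option autoImplicit false

/-- The four truth values of the Belnap–Dunn logic. -/
inductive DM4 : Type
  | t
  | f
  | n
  | b
deriving DecidableEq

namespace DM4

/-- De Morgan negation. -/
def neg : DM4 → DM4
  | t => f
  | f => t
  | n => n
  | b => b

/-- Conflation. -/
def conf : DM4 → DM4
  | t => t
  | f => f
  | n => b
  | b => n

/-- Meet in the truth order. -/
def meet : DM4 → DM4 → DM4
  | f, _ => f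
  | _, f => f
  | t, y => y
  | x, t => x
  | n, n => n
  | b, b => b
  | n, b => f
  | b, n => f

/-- Join in the truth order. -/
def join : DM4 → DM4 → DM4
  | t, _ => t
  | _, t => t
  | f, y => y
  | x, f => x
  | n, n => n
  | b, b => b
  | n, b => t
  | b, n => t

/-- Meet in the information order (⊗). -/
def imeet : DM4 → DM4 → DM4
  | n, _ => n
  | _, n => n
  | b, y => y
  | x, b => x
  | t, t => t
  | f, f => f
  | t, f => n
  | f, t => n

/-- Join in the information order (⊕). -/
def ijoin : DM4 → DM4 → DM4
  | b, _ => b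
  | _, b => b
  | n, y => y
  | x, n => x
  | t, t => t
  | f, f => f
  | t, f => b
  | f, t => b

/-- The truth order: least element `f`, greatest element `t`, with `n`, `b` incomparable. -/
def tle (x y : DM4) : Prop := x = y ∨ x = f ∨ y = t

/-- The information order: least element `n`, greatest element `b`, with `t`, `f` incomparable. -/
def ile (x y : DM4) : Prop := x = y ∨ x = n ∨ y = b

/-- □: maps t to t and everything else to f. -/
def box : DM4 → DM4
  | t => t
  | _ => f

/-- ◇: maps f to f and everything else to t. -/
def diamond : DM4 → DM4
  | f => f
  | _ => t

/-- Δ: maps t, b to t and n, f to f. -/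
def delta : DM4 → DM4
  | t => t
  | b => t
  | _ => f

/-- ∇: maps t, n to t and b, f to f. -/
def nabla : DM4 → DM4
  | t => t
  | n => t
  | _ => f

/-- id_{b↦n}: maps b to n and fixes t, f, n. -/
def idbn : DM4 → DM4
  | b => n
  | x => x

/-- id_{n↦b}: maps n to b and fixes t, f, b. -/
def idnb : DM4 → DM4
  | n => b
  | x => x

/-- id_{n↦t}: maps n to t and fixes t, f, b. -/
def idnt : DM4 → DM4
  | n => t
  | x => x

/-- id_{b↦t}: maps b to t and fixes t, f, n. -/
def idbt : DM4 → DM4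
  | b => t
  | x => x

/-- t_{n↦n}: maps n to n and everything else to t. -/
def tnn : DM4 → DM4
  | n => n
  | _ => t

/-- t_{b↦b}: maps b to b and everything else to t. -/
def tbb : DM4 → DM4
  | b => b
  | _ => t

/-- The binary function pbp²₁. -/
def pbp1 : DM4 → DM4 → DM4
  | t, t => t | t, f => f | t, n => f | t, b => b
  | f, t => t | f, f => f | f, n => f | f, b => b
  | n, t => t | n, f => f | n, n => n | n, b => b
  | b, t => b | b, f => f | b, n => f | b, b => b

/-- The binary function pbp²₂. -/
def pbp2 : DM4 → DM4 → DM4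
  | t, t => t | t, f => f | t, n => n | t, b => f
  | f, t => t | f, f => f | f, n => n | f, b => f
  | n, t => n | n, f => f | n, n => n | n, b => f
  | b, t => t | b, f => f | b, n => n | b, b => b

/-- The binary function mnh²₁. -/
def mnh1 : DM4 → DM4 → DM4
  | t, t => f | t, f => f | t, n => n | t, b => b
  | f, t => f | f, f => f | f, n => n | f, b => b
  | n, t => f | n, f => f | n, n => n | n, b => f
  | b, t => f | b, f => f | b, n => n | b, b => b

/-- The binary function mnh²₂. -/
def mnh2 : DM4 → DM4 → DM4
  | t, t => f | t, f => f | t, n => n | t, b => b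
  | f, t => f | f, f => f | f, n => n | f, b => b
  | n, t => f | n, f => f | n, n => n | n, b => b
  | b, t => f | b, f => f | b, n => f | b, b => b

/-- The binary function mhnp². -/
def mhnp2 : DM4 → DM4 → DM4
  | t, _ => t
  | f, _ => t
  | n, b => f
  | n, _ => n
  | b, n => f
  | b, _ => b

/-- The binary function mnp²₁. -/
def mnp1 : DM4 → DM4 → DM4
  | t, b => b
  | t, _ => t
  | f, b => b
  | f, _ => t
  | n, b => f
  | n, _ => n
  | b, n => f
  | b, _ => b

/-- The binary function mnp²₂. -/
def mnp2 : DM4 → DM4 → DM4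
  | t, _ => t
  | f, _ => t
  | n, _ => n
  | b, n => f
  | b, _ => b

/-- The binary function mnp²₃. -/
def mnp3 : DM4 → DM4 → DM4
  | t, n => n
  | t, _ => t
  | f, n => n
  | f, _ => t
  | n, b => f
  | n, _ => n
  | b, n => f
  | b, _ => b

/-- The binary function mnp²₄. -/
def mnp4 : DM4 → DM4 → DM4
  | t, _ => t
  | f, _ => t
  | n, b => f
  | n, _ => n
  | b, _ => b

/-- The ternary function mhnp³. -/
def mhnp3 : DM4 → DM4 → DM4 → DM4
  | _, t, _ => f
  | _, f, _ => f
  | t, n, _ => n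
  | f, n, _ => f
  | b, n, _ => f
  | n, n, b => f
  | n, n, _ => n
  | t, b, _ => b
  | f, b, _ => f
  | n, b, _ => f
  | b, b, n => f
  | b, b, _ => b

/-- The set of designated values. -/
def Des : Set DM4 := {t, b}

/-- Designatedness as a Boolean predicate. -/
def des : DM4 → Bool
  | t => true
  | b => true
  | _ => false

/-- The protoimplication →_{t-max}. -/
def tmax (x y : DM4) : DM4 :=
  match des x, des y with
  | true, false => n
  | _, _ => t

/-- The protoimplication →_{i-max}. -/
def imax (x y : DM4) : DM4 :=
  match des x, des y with
  | true, false => f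
  | _, _ => b

/-- The protoimplication ↔_{t-min}. -/
def tmin (x y : DM4) : DM4 := if x = y then b else f

/-- The protoimplication ↔_{i-min}. -/
def imin (x y : DM4) : DM4 := if x = y then t else n

/-- A binary operation is a protoimplication if it satisfies Reflexivity and Modus Ponens
with respect to the designated set {t, b}. -/
def IsProtoimplication (r : DM4 → DM4 → DM4) : Prop :=
  (∀ a : DM4, r a a ∈ Des) ∧ ∀ a c : DM4, a ∈ Des → r a c ∈ Des → c ∈ Des

/-- `DMFun k` is the type of De Morgan functions of arity `k + 1` (arities are positive). -/
abbrev DMFun (k : ℕ) : Type := (Fin (k + 1) → DM4) → DM4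

/-- Membership in the clone generated by the family of operations `S`
(`S k` is the set of generators of arity `k + 1`). -/
inductive InClone (S : ∀ k : ℕ, Set (DMFun k)) : ∀ k : ℕ, DMFun k → Prop
  | base {k : ℕ} {g : DMFun k} : g ∈ S k → InClone S k g
  | proj {k : ℕ} (i : Fin (k + 1)) : InClone S k (fun x => x i)
  | comp {k m : ℕ} {g : DMFun m} {h : Fin (m + 1) → DMFun k} :
      InClone S m g → (∀ i, InClone S k (h i)) →
      InClone S k (fun x => g (fun i => h i x))

/-- A family of sets of De Morgan functions is a clone if it contains all projections
and is closed under composition. -/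
structure IsClone (C : ∀ k : ℕ, Set (DMFun k)) : Prop where
  proj : ∀ (k : ℕ) (i : Fin (k + 1)), (fun x => x i) ∈ C k
  comp : ∀ (k m : ℕ) (g : DMFun m) (h : Fin (m + 1) → DMFun k),
      g ∈ C m → (∀ i, h i ∈ C k) → (fun x => g (fun i => h i x)) ∈ C k

/-- The generating family consisting of a single unary operation. -/
def op1 (g : DM4 → DM4) : ∀ k : ℕ, Set (DMFun k)
  | 0 => {fun x => g (x 0)}
  | _ + 1 => ∅

/-- The generating family consisting of a single binary operation. -/
def op2 (g : DM4 → DM4 → DM4) : ∀ k : ℕ, Set (DMFun k)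
  | 1 => {fun x => g (x 0) (x 1)}
  | _ => ∅

/-- The generating family consisting of a single ternary operation. -/
def op3 (g : DM4 → DM4 → DM4 → DM4) : ∀ k : ℕ, Set (DMFun k)
  | 2 => {fun x => g (x 0) (x 1) (x 2)}
  | _ => ∅

/-- Union of two families of operations. -/
def funion (S T : ∀ k : ℕ, Set (DMFun k)) : ∀ k : ℕ, Set (DMFun k) := fun k => S k ∪ T k

infixr:65 " ⊹ " => funion

/-- The generators of DLat: ∧, ∨, t, f (constants as unary constant functions). -/
def DLatGen : ∀ k : ℕ, Set (DMFun k) :=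
  op2 meet ⊹ op2 join ⊹ op1 (fun _ => t) ⊹ op1 (fun _ => f)

/-- The generators of DMA: ∧, ∨, t, f, −. -/
def DMAGen : ∀ k : ℕ, Set (DMFun k) := DLatGen ⊹ op1 neg

/-- The generators of BiLat: ∧, ∨, t, f, ⊗, ⊕, n, b. -/
def BiLatGen : ∀ k : ℕ, Set (DMFun k) :=
  DLatGen ⊹ op2 imeet ⊹ op2 ijoin ⊹ op1 (fun _ => n) ⊹ op1 (fun _ => b)

/-- A De Morgan function is harmonious if it commutes with conflation. -/
def Harmonious {k : ℕ} (g : DMFun k) : Prop :=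
  ∀ x : Fin (k + 1) → DM4, g (fun i => conf (x i)) = conf (g x)

/-- A De Morgan function is positive if it is monotone in the componentwise truth order. -/
def Positive {k : ℕ} (g : DMFun k) : Prop :=
  ∀ x y : Fin (k + 1) → DM4, (∀ i, tle (x i) (y i)) → tle (g x) (g y)

/-- A De Morgan function is persistent if it is monotone in the componentwise
information order. -/
def Persistent {k : ℕ} (g : DMFun k) : Prop :=
  ∀ x y : Fin (k + 1) → DM4, (∀ i, ile (x i) (y i)) → ile (g x) (g y)

/-- A De Morgan function preserves a subset X of DM4 if it maps tuples from X into X. -/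
def Preserves {k : ℕ} (g : DMFun k) (X : Set DM4) : Prop :=
  ∀ x : Fin (k + 1) → DM4, (∀ i, x i ∈ X) → g x ∈ X

def B2 : Set DM4 := {t, f}
def K3 : Set DM4 := {t, n, f}
def P3 : Set DM4 := {t, b, f}

/-- A unary operation as a De Morgan function. -/
def toF1 (g : DM4 → DM4) : DMFun 0 := fun x => g (x 0)

/-- A binary operation as a De Morgan function. -/
def toF2 (g : DM4 → DM4 → DM4) : DMFun 1 := fun x => g (x 0) (x 1)

/-- A ternary operation as a De Morgan function. -/
def toF3 (g : DM4 → DM4 → DM4 → DM4) : DMFun 2 := fun x => g (x 0) (x 1) (x 2)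

/-- The clone generated by a family of operations, as a family of sets. -/
def CloneOf (S : ∀ k : ℕ, Set (DMFun k)) : ∀ k : ℕ, Set (DMFun k) :=
  fun k => {g | InClone S k g}

/-- Inclusion of families of operations. -/
def CloneLE (C D : ∀ k : ℕ, Set (DMFun k)) : Prop := ∀ k : ℕ, C k ⊆ D k


/-! ### Auxiliary development -/

instance : Fintype DM4 :=
  ⟨⟨{t, f, n, b}, by decide⟩, by intro x; cases x <;> decide⟩

instance (x y : DM4) : Decidable (tle x y) := by unfold tle; infer_instance
instance (x y : DM4) : Decidable (ile x y) := by unfold ile; infer_instance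

/-- First Boolean coordinate of a truth value (under DM4 ≅ Bool × Bool). -/
def pi1 : DM4 → Bool
  | t => true
  | n => true
  | _ => false

/-- Second Boolean coordinate. -/
def pi2 : DM4 → Bool
  | t => true
  | b => true
  | _ => false

/-- Reconstruct a truth value from its Boolean coordinates. -/
def mk : Bool → Bool → DM4
  | true, true => t
  | true, false => n
  | false, true => b
  | false, false => f

lemma mk_pi (x : DM4) : mk (pi1 x) (pi2 x) = x := by cases x <;> rfl

lemma pi_ext {x y : DM4} (h1 : pi1 x = pi1 y) (h2 : pi2 x = pi2 y) : x = y := by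
  rw [← mk_pi x, ← mk_pi y, h1, h2]

lemma pi1_meet (x y : DM4) : pi1 (meet x y) = (pi1 x && pi1 y) := by cases x <;> cases y <;> rfl
lemma pi2_meet (x y : DM4) : pi2 (meet x y) = (pi2 x && pi2 y) := by cases x <;> cases y <;> rfl
lemma pi1_join (x y : DM4) : pi1 (join x y) = (pi1 x || pi1 y) := by cases x <;> cases y <;> rfl
lemma pi2_join (x y : DM4) : pi2 (join x y) = (pi2 x || pi2 y) := by cases x <;> cases y <;> rfl
lemma pi1_conf (x : DM4) : pi1 (conf x) = pi2 x := by cases x <;> rfl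
lemma pi2_conf (x : DM4) : pi2 (conf x) = pi1 x := by cases x <;> rfl
lemma pi1_t : pi1 t = true := rfl
lemma pi2_t : pi2 t = true := rfl
lemma pi1_f : pi1 f = false := rfl
lemma pi2_f : pi2 f = false := rfl

lemma mk_mono : ∀ b1 b2 b1' b2' : Bool, (b1 = true → b1' = true) → (b2 = true → b2' = true) →
    tle (mk b1 b2) (mk b1' b2') := by decide

lemma pi1_mono : ∀ x y : DM4, tle x y → pi1 x = true → pi1 y = true := by decide

lemma mk_pi1 (a : DM4) : mk (pi1 a) (pi1 (conf a)) = a := by cases a <;> rfl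
lemma mk_pi2 (a : DM4) : mk (pi2 a) (pi2 (conf a)) = conf a := by cases a <;> rfl

/-- Lattice terms with variables of type `α`. -/
inductive LT (α : Type) : Type
  | var : α → LT α
  | top : LT α
  | bot : LT α
  | and : LT α → LT α → LT α
  | or : LT α → LT α → LT α

/-- Evaluation of a lattice term in DM4. -/
def evalD {α : Type} : LT α → (α → DM4) → DM4
  | .var a, σ => σ a
  | .top, _ => t
  | .bot, _ => f
  | .and s u, σ => meet (evalD s σ) (evalD u σ)
  | .or s u, σ => join (evalD s σ) (evalD u σ)

/-- Evaluation of a lattice term in Bool. -/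
def evalB {α : Type} : LT α → (α → Bool) → Bool
  | .var a, w => w a
  | .top, _ => true
  | .bot, _ => false
  | .and s u, w => evalB s w && evalB u w
  | .or s u, w => evalB s w || evalB u w

lemma pi1_evalD {α : Type} (T : LT α) (σ : α → DM4) :
    pi1 (evalD T σ) = evalB T (fun a => pi1 (σ a)) := by
  induction T <;> simp [evalD, evalB, pi1_meet, pi1_join, pi1_t, pi1_f, *]

lemma pi2_evalD {α : Type} (T : LT α) (σ : α → DM4) :
    pi2 (evalD T σ) = evalB T (fun a => pi2 (σ a)) := by
  induction T <;> simp [evalD, evalB, pi2_meet, pi2_join, pi2_t, pi2_f, *]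

def bigAnd {α : Type} : List α → LT α
  | [] => .top
  | a :: l => .and (.var a) (bigAnd l)

def bigOr {α : Type} : List (LT α) → LT α
  | [] => .bot
  | T :: l => .or T (bigOr l)

lemma evalB_bigAnd {α : Type} (l : List α) (w : α → Bool) :
    evalB (bigAnd l) w = l.all w := by
  induction l <;> simp [bigAnd, evalB, *]

lemma evalB_bigOr {α : Type} (l : List (LT α)) (w : α → Bool) :
    evalB (bigOr l) w = l.any (fun T => evalB T w) := by
  induction l <;> simp [bigOr, evalB, *]

/-- Every monotone Boolean function is represented by a lattice term. -/
lemma monotone_rep {α : Type} [Fintype α] [DecidableEq α]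
    (F : (α → Bool) → Bool)
    (hF : ∀ w w' : α → Bool, (∀ a, w a = true → w' a = true) → F w = true → F w' = true) :
    ∃ T : LT α, ∀ w, evalB T w = F w := by
  classical
  refine ⟨bigOr (((Finset.univ : Finset (α → Bool)).filter (fun a => F a = true)).toList.map
    (fun a => bigAnd ((Finset.univ.filter (fun i => a i = true)).toList))), fun w => ?_⟩
  rw [evalB_bigOr]
  have key : ((((Finset.univ : Finset (α → Bool)).filter (fun a => F a = true)).toList.map
      (fun a => bigAnd ((Finset.univ.filter (fun i => a i = true)).toList))).any
      (fun T => evalB T w)) = true ↔ F w = true := by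
    constructor
    · intro h
      simp only [List.any_eq_true, List.mem_map, Finset.mem_toList, Finset.mem_filter] at h
      obtain ⟨_, ⟨a, ⟨-, hFa⟩, rfl⟩, hEv⟩ := h
      rw [evalB_bigAnd, List.all_eq_true] at hEv
      exact hF a w (fun i hi => hEv i (by simp [hi])) hFa
    · intro h
      simp only [List.any_eq_true, List.mem_map, Finset.mem_toList, Finset.mem_filter]
      refine ⟨_, ⟨w, ⟨Finset.mem_univ _, h⟩, rfl⟩, ?_⟩
      rw [evalB_bigAnd, List.all_eq_true]
      intro i hi
      simpa using hi
  rcases ha : (_ : List _).any _ with _ | _ <;> rcases hb : F w with _ | _ <;> simp_all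

section CloneLemmas

variable {S : ∀ k : ℕ, Set (DMFun k)} {k : ℕ}

lemma clone_comp1 (g0 : DM4 → DM4) (hg : InClone S 0 (toF1 g0)) {A : DMFun k}
    (hA : InClone S k A) : InClone S k (fun x => g0 (A x)) :=
  InClone.comp hg (fun _ => hA)

lemma clone_comp2 (g0 : DM4 → DM4 → DM4) (hg : InClone S 1 (toF2 g0)) {A B : DMFun k}
    (hA : InClone S k A) (hB : InClone S k B) :
    InClone S k (fun x => g0 (A x) (B x)) := by
  have h : ∀ i : Fin 2, InClone S k (if i = 0 then A else B) := by
    intro i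
    fin_cases i
    · simpa using hA
    · simpa using hB
  exact InClone.comp hg h

lemma clone_const (c : DM4) (hc : InClone S 0 (toF1 (fun _ => c))) :
    InClone S k (fun _ => c) :=
  InClone.comp hc (fun _ => InClone.proj 0)

end CloneLemmas

lemma mem_meet : InClone (DLatGen ⊹ op1 conf) 1 (toF2 meet) := by
  apply InClone.base
  show _ ∈ (_ ∪ _ : Set _)
  exact Or.inl (Or.inl rfl)

lemma mem_join : InClone (DLatGen ⊹ op1 conf) 1 (toF2 join) := by
  apply InClone.base
  show _ ∈ (_ ∪ _ : Set _)
  exact Or.inl (Or.inr (Or.inl rfl))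

lemma mem_t : InClone (DLatGen ⊹ op1 conf) 0 (toF1 (fun _ => t)) := by
  apply InClone.base
  show _ ∈ (_ ∪ _ : Set _)
  exact Or.inl (Or.inr (Or.inr (Or.inl rfl)))

lemma mem_f : InClone (DLatGen ⊹ op1 conf) 0 (toF1 (fun _ => f)) := by
  apply InClone.base
  show _ ∈ (_ ∪ _ : Set _)
  exact Or.inl (Or.inr (Or.inr (Or.inr rfl)))

lemma mem_conf : InClone (DLatGen ⊹ op1 conf) 0 (toF1 conf) := by
  apply InClone.base
  show _ ∈ (_ ∪ _ : Set _)
  exact Or.inr rfl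

/-- The assignment sending `(i, false)` to `x i` and `(i, true)` to `∂(x i)`. -/
def sig {k : ℕ} (x : Fin (k + 1) → DM4) : Fin (k + 1) × Bool → DM4 :=
  fun p => cond p.2 (conf (x p.1)) (x p.1)

lemma term_in_clone {k : ℕ} (T : LT (Fin (k + 1) × Bool)) :
    InClone (DLatGen ⊹ op1 conf) k (fun x => evalD T (sig x)) := by
  induction T with
  | var a =>
    obtain ⟨i, s⟩ := a
    cases s
    · exact InClone.proj i
    · exact clone_comp1 conf mem_conf (InClone.proj i)
  | top => exact clone_const t mem_t
  | bot => exact clone_const f mem_f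
  | and s u ihs ihu => exact clone_comp2 meet mem_meet ihs ihu
  | or s u ihs ihu => exact clone_comp2 join mem_join ihs ihu

lemma backward {k : ℕ} (g : DMFun k) (hH : Harmonious g) (hP : Positive g) :
    InClone (DLatGen ⊹ op1 conf) k g := by
  classical
  obtain ⟨T, hT⟩ := monotone_rep
    (fun w : Fin (k + 1) × Bool → Bool => pi1 (g (fun i => mk (w (i, false)) (w (i, true)))))
    (by
      intro w w' hle
      apply pi1_mono
      apply hP
      intro i
      exact mk_mono _ _ _ _ (hle (i, false)) (hle (i, true)))
  have hg : g = fun x => evalD T (sig x) := by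
    funext x
    apply pi_ext
    · rw [pi1_evalD, hT]
      have h2 : (fun i => mk ((fun a => pi1 (sig x a)) (i, false))
          ((fun a => pi1 (sig x a)) (i, true))) = x := funext fun i => mk_pi1 (x i)
      rw [h2]
    · rw [pi2_evalD, hT]
      have h2 : (fun i => mk ((fun a => pi2 (sig x a)) (i, false))
          ((fun a => pi2 (sig x a)) (i, true))) = fun i => conf (x i) :=
        funext fun i => mk_pi2 (x i)
      rw [h2, hH x, pi1_conf]
  rw [hg]
  exact term_in_clone T

lemma gen_hp {k : ℕ} (g : DMFun k) (hg : g ∈ (DLatGen ⊹ op1 conf) k) :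
    Harmonious g ∧ Positive g := by
  revert hg
  revert g
  match k with
  | 0 =>
    intro g hg
    rcases hg with hg | hg
    · rcases hg with hg | hg
      · exact hg.elim
      · rcases hg with hg | hg
        · exact hg.elim
        · rcases hg with hg | hg
          · obtain rfl := hg
            exact ⟨by unfold Harmonious; decide, by unfold Positive; decide⟩
          · obtain rfl := hg
            exact ⟨by unfold Harmonious; decide, by unfold Positive; decide⟩
    · obtain rfl := hg
      exact ⟨by unfold Harmonious; decide, by unfold Positive; decide⟩
  | 1 =>
    intro g hg
    rcases hg with hg | hg
    · rcases hg with hg | hg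
      · obtain rfl := hg
        exact ⟨by unfold Harmonious; decide, by unfold Positive; decide⟩
      · rcases hg with hg | hg
        · obtain rfl := hg
          exact ⟨by unfold Harmonious; decide, by unfold Positive; decide⟩
        · rcases hg with hg | hg <;> exact hg.elim
    · exact hg.elim
  | (m + 2) =>
    intro g hg
    rcases hg with hg | hg
    · rcases hg with hg | hg
      · exact hg.elim
      · rcases hg with hg | hg
        · exact hg.elim
        · rcases hg with hg | hg <;> exact hg.elim
    · exact hg.elim

lemma forward {k : ℕ} (g : DMFun k) (h : InClone (DLatGen ⊹ op1 conf) k g) :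
    Harmonious g ∧ Positive g := by
  induction h with
  | base hg => exact gen_hp _ hg
  | proj i => exact ⟨fun x => rfl, fun x y hxy => hxy i⟩
  | comp hgm hh ihg ihh =>
    rename_i k' m' g' h'
    obtain ⟨hgH, hgP⟩ := ihg
    constructor
    · intro x
      show g' (fun i => h' i (fun j => conf (x j))) = conf (g' (fun i => h' i x))
      have he : (fun i => h' i (fun j => conf (x j))) = fun i => conf (h' i x) := by
        funext i; exact (ihh i).1 x
      rw [he]
      exact hgH _
    · intro x y hxy
      exact hgP _ _ (fun i => (ihh i).2 x y hxy)


/-- A De Morgan function lies in ⟨DLat, ∂⟩ = ⟨∧, ∨, t, f, ∂⟩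
iff it is harmonious and positive. -/
theorem harmonious_positive_clone_characterization (k : ℕ) (g : DMFun k) :
    InClone (DLatGen ⊹ op1 conf) k g ↔ Harmonious g ∧ Positive g := by
  constructor
  · exact forward g
  · exact fun ⟨h1, h2⟩ => backward g h1 h2

end DM4
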